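/- arXiv:2511.00896 — 5 statements merged into one kernel-verified Lean document; each statement's English description precedes it below -/
import Mathlib

section
/- Let V be a finite set of N nodes and let G_1, …, G_k, H_1, …, H_e ⊆ V be pairwise disjoint groups of size R each, with N ≥ R(k+e), where G_i holds the R copies of original fragment i and H_j holds the R copies of MDS coded fragment j. Call a lost set S ⊆ V non-fatal iff #{i : G_i ⊆ S} ≤ #{j : H_j ⊄ S}. Then for 0 ≤ L ≤ N, the number of non-fatal size-L subsets S ⊆ V equals the sum, over all integer tuples (x_1, …, x_k, y_1, …, y_e, z) with 0 ≤ x_i ≤ R, 0 ≤ y_j ≤ R, 0 ≤ z ≤ N−R(k+e), #{i : x_i = 0} ≤ #{j : y_j > 0}, and x_1 + … + x_k + y_1 + … + y_e + z = N−L, of (∏_{i=1}^k C(R, x_i)) · (∏_{j=1}^e C(R, y_j)) · C(N−R(k+e), z); consequently the probability of file loss given L uniformly random lost nodes equals 1 minus this sum divided by C(N,L). (Paper's Theorem 3, HyRES(R,e,e,k).) -/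
open Finset

lemma hy_inter_biUnion {α ι : Type*} [DecidableEq α] [Fintype ι] [DecidableEq ι]
    {B : ι → Finset α} (hdisj : ∀ i j : ι, i ≠ j → Disjoint (B i) (B j))
    {F : ι → Finset α} (hF : ∀ t, F t ⊆ B t) (i : ι) :
    B i ∩ Finset.univ.biUnion F = F i := by
  ext a
  simp only [mem_inter, mem_biUnion, mem_univ, true_and]
  constructor
  · rintro ⟨hai, t, hat⟩
    by_cases h : t = i
    · exact h ▸ hat
    · exact absurd hai (Finset.disjoint_left.mp (hdisj t i h) (hF t hat))
  · intro h
    exact ⟨hF i h, i, h⟩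

lemma hy_partition_count {α ι : Type*} [DecidableEq α] [Fintype ι] [DecidableEq ι]
    (B : ι → Finset α) (hdisj : ∀ i j : ι, i ≠ j → Disjoint (B i) (B j)) (c : ι → ℕ) :
    (((Finset.univ.biUnion B).powerset).filter (fun T => ∀ i, (B i ∩ T).card = c i)).card
      = ∏ i, (B i).card.choose (c i) := by
  rw [show ∏ i, (B i).card.choose (c i) = ∏ i, ((B i).powersetCard (c i)).card by
        simp [Finset.card_powersetCard], ← Fintype.card_piFinset]
  apply Finset.card_bij' (fun T _ => fun t => B t ∩ T) (fun F _ => Finset.univ.biUnion F)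
  · intro T hT
    simp only [mem_filter, mem_powerset] at hT
    simp only [Fintype.mem_piFinset, mem_powersetCard]
    exact fun t => ⟨inter_subset_left, hT.2 t⟩
  · intro F hF
    simp only [Fintype.mem_piFinset, mem_powersetCard] at hF
    simp only [mem_filter, mem_powerset]
    constructor
    · exact Finset.biUnion_subset.mpr fun t _ => (hF t).1.trans (subset_biUnion_of_mem B (mem_univ t))
    · intro i
      rw [hy_inter_biUnion hdisj (fun t => (hF t).1)]
      exact (hF i).2
  · intro T hT
    simp only [mem_filter, mem_powerset] at hT
    ext a
    simp only [mem_biUnion, mem_univ, true_and, mem_inter]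
    exact ⟨fun ⟨t, _, h⟩ => h, fun h => by
      obtain ⟨t, ht⟩ := mem_biUnion.mp (hT.1 h); exact ⟨t, ht.2, h⟩⟩
  · intro F hF
    simp only [Fintype.mem_piFinset, mem_powersetCard] at hF
    funext i
    exact hy_inter_biUnion hdisj (fun t => (hF t).1) i

/-- **Paper's Theorem 3 (HyRES(R,e,e,k)).**
Let `V` be a finite set of `N` nodes and `G 1, …, G k, H 1, …, H e ⊆ V` pairwise
disjoint groups of size `R` each, with `N ≥ R(k+e)`, where `G i` holds the `R` copies
of original fragment `i` and `H j` the `R` copies of MDS coded fragment `j`. A lost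
set `S` is non-fatal iff `#{i : G i ⊆ S} ≤ #{j : ¬ H j ⊆ S}`. Then for `0 ≤ L ≤ N`
the number of non-fatal size-`L` subsets `S ⊆ V` equals the sum, over all tuples
`(x 1, …, x k, y 1, …, y e, z)` with `0 ≤ x i ≤ R`, `0 ≤ y j ≤ R`,
`0 ≤ z ≤ N−R(k+e)`, `#{i : x i = 0} ≤ #{j : y j > 0}` and
`∑ x i + ∑ y j + z = N−L`, of
`(∏ i, C(R, x i)) · (∏ j, C(R, y j)) · C(N−R(k+e), z)`; consequently the probability
of file loss given `L` uniformly random lost nodes equals `1` minus this sum divided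
by `C(N,L)`. -/
theorem hyres_le_file_loss_probability
    {α : Type*} [DecidableEq α] (V : Finset α)
    (N R e L k : ℕ) (G : Fin k → Finset α) (H : Fin e → Finset α)
    (hV : V.card = N)
    (hGV : ∀ i, G i ⊆ V) (hHV : ∀ j, H j ⊆ V)
    (hGcard : ∀ i, (G i).card = R) (hHcard : ∀ j, (H j).card = R)
    (hGdisj : ∀ i j, i ≠ j → Disjoint (G i) (G j))
    (hHdisj : ∀ i j, i ≠ j → Disjoint (H i) (H j))
    (hGH : ∀ i j, Disjoint (G i) (H j))
    (hN : R * (k + e) ≤ N) (hL : L ≤ N) :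
    (((V.powersetCard L).filter
        (fun S => (Finset.univ.filter (fun i => G i ⊆ S)).card
                    ≤ (Finset.univ.filter (fun j => ¬ H j ⊆ S)).card)).card
      = ∑ x ∈ Fintype.piFinset (fun _ : Fin k => Finset.range (R + 1)),
          ∑ y ∈ Fintype.piFinset (fun _ : Fin e => Finset.range (R + 1)),
            ∑ z ∈ Finset.range (N - R * (k + e) + 1),
              if (Finset.univ.filter (fun i => x i = 0)).card
                    ≤ (Finset.univ.filter (fun j => 0 < y j)).card ∧
                  (∑ i, x i) + (∑ j, y j) + z = N - L
                then (∏ i, R.choose (x i)) * (∏ j, R.choose (y j))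
                      * (N - R * (k + e)).choose z
                else 0) ∧
    ((((V.powersetCard L).filter
        (fun S => ¬ (Finset.univ.filter (fun i => G i ⊆ S)).card
                    ≤ (Finset.univ.filter (fun j => ¬ H j ⊆ S)).card)).card : ℚ)
          / (N.choose L : ℚ)
      = 1 - ((∑ x ∈ Fintype.piFinset (fun _ : Fin k => Finset.range (R + 1)),
          ∑ y ∈ Fintype.piFinset (fun _ : Fin e => Finset.range (R + 1)),
            ∑ z ∈ Finset.range (N - R * (k + e) + 1),
              if (Finset.univ.filter (fun i => x i = 0)).card
                    ≤ (Finset.univ.filter (fun j => 0 < y j)).card ∧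
                  (∑ i, x i) + (∑ j, y j) + z = N - L
                then (∏ i, R.choose (x i)) * (∏ j, R.choose (y j))
                      * (N - R * (k + e)).choose z
                else 0 : ℕ) : ℚ) / (N.choose L : ℚ)) := by
  -- notation
  set M := N - R * (k + e) with hM
  have hGUV : Finset.univ.biUnion G ⊆ V := Finset.biUnion_subset.mpr fun i _ => hGV i
  have hHUV : Finset.univ.biUnion H ⊆ V := Finset.biUnion_subset.mpr fun j _ => hHV j
  set W := V \ (Finset.univ.biUnion G ∪ Finset.univ.biUnion H) with hWdef
  have hWV : W ⊆ V := sdiff_subset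
  have hGUcard : (Finset.univ.biUnion G).card = k * R := by
    rw [card_biUnion (fun i _ j _ h => hGdisj i j h)]
    simp [hGcard, mul_comm]
  have hHUcard : (Finset.univ.biUnion H).card = e * R := by
    rw [card_biUnion (fun i _ j _ h => hHdisj i j h)]
    simp [hHcard, mul_comm]
  have hGUHU : Disjoint (Finset.univ.biUnion G) (Finset.univ.biUnion H) := by
    rw [Finset.disjoint_biUnion_left]
    intro i _
    rw [Finset.disjoint_biUnion_right]
    exact fun j _ => hGH i j
  have hWcard : W.card = M := by
    rw [hWdef, card_sdiff_of_subset (union_subset hGUV hHUV), card_union_of_disjoint hGUHU,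
      hGUcard, hHUcard, hV, hM]
    have : k * R + e * R = R * (k + e) := by ring
    rw [this]
  -- the blocks
  set B : (Fin k ⊕ Fin e) ⊕ Unit → Finset α :=
    Sum.elim (Sum.elim G H) (fun _ => W) with hB
  have hWG : ∀ i, Disjoint (G i) W := by
    intro i
    rw [Finset.disjoint_right]
    intro a haW haG
    exact (mem_sdiff.mp haW).2 (mem_union_left _ (mem_biUnion.mpr ⟨i, mem_univ i, haG⟩))
  have hWH : ∀ j, Disjoint (H j) W := by
    intro j
    rw [Finset.disjoint_right]
    intro a haW haH
    exact (mem_sdiff.mp haW).2 (mem_union_right _ (mem_biUnion.mpr ⟨j, mem_univ j, haH⟩))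
  have hBdisj : ∀ s t : (Fin k ⊕ Fin e) ⊕ Unit, s ≠ t → Disjoint (B s) (B t) := by
    rintro ((i | i) | ⟨⟩) ((j | j) | ⟨⟩) hne <;>
      simp only [hB, Sum.elim_inl, Sum.elim_inr]
    · exact hGdisj i j (by simpa using hne)
    · exact hGH i j
    · exact hWG i
    · exact (hGH j i).symm
    · exact hHdisj i j (by simpa using hne)
    · exact hWH i
    · exact (hWG j).symm
    · exact (hWH j).symm
    · exact absurd rfl hne
  have hVB : Finset.univ.biUnion B = V := by
    apply Finset.Subset.antisymm
    · refine Finset.biUnion_subset.mpr ?_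
      rintro ((i | j) | u) _
      · exact hGV i
      · exact hHV j
      · exact hWV
    · intro a ha
      by_cases hg : a ∈ Finset.univ.biUnion G
      · obtain ⟨i, _, hi⟩ := mem_biUnion.mp hg
        exact mem_biUnion.mpr ⟨Sum.inl (Sum.inl i), mem_univ _, hi⟩
      · by_cases hh : a ∈ Finset.univ.biUnion H
        · obtain ⟨j, _, hj⟩ := mem_biUnion.mp hh
          exact mem_biUnion.mpr ⟨Sum.inl (Sum.inr j), mem_univ _, hj⟩
        · refine mem_biUnion.mpr ⟨Sum.inr (), mem_univ _, ?_⟩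
          simp only [hB, Sum.elim_inr, hWdef, mem_sdiff, mem_union]
          exact ⟨ha, fun h => h.elim hg hh⟩
  -- cardinality of any subset of V decomposes along the blocks
  have hTcard : ∀ T : Finset α, T ⊆ V →
      T.card = (∑ i, (G i ∩ T).card) + (∑ j, (H j ∩ T).card) + (W ∩ T).card := by
    intro T hTV
    have h1 : T = Finset.univ.biUnion (fun t => B t ∩ T) := by
      nth_rewrite 1 [show T = Finset.univ.biUnion B ∩ T from by
        rw [hVB, inter_eq_right.mpr hTV]]
      rw [Finset.biUnion_inter]
    conv_lhs => rw [h1]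
    rw [card_biUnion (fun s _ t _ h =>
      (hBdisj s t h).mono inter_subset_left inter_subset_left)]
    rw [Fintype.sum_sum_type, Fintype.sum_sum_type]
    simp [hB, add_assoc]
  -- set-algebra helpers
  have hInterSdiff : ∀ (s T : Finset α), s ⊆ V → s ∩ (V \ T) = s \ T := by
    intro s T h
    ext a
    by_cases has : a ∈ s <;> simp [has, h, mem_sdiff, mem_inter]
    exact fun _ => h has
  have hSdiffSdiff : ∀ (s T : Finset α), s ⊆ V → s \ (V \ T) = s ∩ T := by
    intro s T h
    ext a
    by_cases has : a ∈ s <;> simp [has, mem_sdiff, mem_inter]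
    exact Or.inl (h has)
  -- the non-fatal condition in terms of survivor counts
  have hNF : ∀ S : Finset α,
      ((Finset.univ.filter (fun i => G i ⊆ S)).card
          ≤ (Finset.univ.filter (fun j => ¬ H j ⊆ S)).card)
        ↔ ((Finset.univ.filter (fun i : Fin k => (G i \ S).card = 0)).card
          ≤ (Finset.univ.filter (fun j : Fin e => 0 < (H j \ S).card)).card) := by
    intro S
    have h1 : (Finset.univ.filter (fun i => G i ⊆ S))
        = (Finset.univ.filter (fun i : Fin k => (G i \ S).card = 0)) := by
      apply Finset.filter_congr
      intro i _
      simp [Finset.card_eq_zero, Finset.sdiff_eq_empty_iff_subset]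
    have h2 : (Finset.univ.filter (fun j => ¬ H j ⊆ S))
        = (Finset.univ.filter (fun j : Fin e => 0 < (H j \ S).card)) := by
      apply Finset.filter_congr
      intro j _
      simp [Finset.card_pos, Finset.sdiff_nonempty]
    rw [h1, h2]
  -- Part 1: counting non-fatal sets fiberwise over survivor profiles
  have part1 :
      (((V.powersetCard L).filter
        (fun S => (Finset.univ.filter (fun i => G i ⊆ S)).card
                    ≤ (Finset.univ.filter (fun j => ¬ H j ⊆ S)).card)).card
      = ∑ x ∈ Fintype.piFinset (fun _ : Fin k => Finset.range (R + 1)),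
          ∑ y ∈ Fintype.piFinset (fun _ : Fin e => Finset.range (R + 1)),
            ∑ z ∈ Finset.range (M + 1),
              if (Finset.univ.filter (fun i => x i = 0)).card
                    ≤ (Finset.univ.filter (fun j => 0 < y j)).card ∧
                  (∑ i, x i) + (∑ j, y j) + z = N - L
                then (∏ i, R.choose (x i)) * (∏ j, R.choose (y j)) * M.choose z
                else 0) := by
    rw [Finset.card_eq_sum_card_fiberwise
      (f := fun S => ((fun i => (G i \ S).card, fun j => (H j \ S).card, (W \ S).card)
        : (Fin k → ℕ) × (Fin e → ℕ) × ℕ))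
      (t := (Fintype.piFinset (fun _ : Fin k => Finset.range (R + 1))) ×ˢ
        ((Fintype.piFinset (fun _ : Fin e => Finset.range (R + 1))) ×ˢ Finset.range (M + 1)))
      (fun S hS => by
        simp only [coe_filter, mem_filter, mem_powersetCard] at hS
        simp only [mem_coe, mem_product, Fintype.mem_piFinset, mem_range]
        refine ⟨fun i => ?_, fun j => ?_, ?_⟩
        · exact Nat.lt_succ_of_le ((card_le_card sdiff_subset).trans (le_of_eq (hGcard i)))
        · exact Nat.lt_succ_of_le ((card_le_card sdiff_subset).trans (le_of_eq (hHcard j)))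
        · exact Nat.lt_succ_of_le ((card_le_card sdiff_subset).trans (le_of_eq hWcard)))]
    rw [Finset.sum_product]
    refine Finset.sum_congr rfl fun x hx => ?_
    rw [Finset.sum_product]
    refine Finset.sum_congr rfl fun y hy => Finset.sum_congr rfl fun z hz => ?_
    by_cases hcond : (Finset.univ.filter (fun i => x i = 0)).card
          ≤ (Finset.univ.filter (fun j => 0 < y j)).card ∧
        (∑ i, x i) + (∑ j, y j) + z = N - L
    · rw [if_pos hcond]
      have hpc := hy_partition_count B hBdisj (Sum.elim (Sum.elim x y) fun _ => z)
      rw [hVB] at hpc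
      have hprod : (∏ t, (B t).card.choose (Sum.elim (Sum.elim x y) (fun _ => z) t))
          = (∏ i, R.choose (x i)) * (∏ j, R.choose (y j)) * M.choose z := by
        rw [Fintype.prod_sum_type, Fintype.prod_sum_type]
        simp [hB, hGcard, hHcard, hWcard]
      have hcards : (((V.powersetCard L).filter
            (fun S => (Finset.univ.filter (fun i => G i ⊆ S)).card
                ≤ (Finset.univ.filter (fun j => ¬ H j ⊆ S)).card)).filter
              (fun S => ((fun i => (G i \ S).card, fun j => (H j \ S).card, (W \ S).card)
                : (Fin k → ℕ) × (Fin e → ℕ) × ℕ) = (x, y, z))).card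
          = ((V.powerset).filter
              (fun T => ∀ t, (B t ∩ T).card = Sum.elim (Sum.elim x y) (fun _ => z) t)).card := by
        apply Finset.card_bij' (fun S _ => V \ S) (fun T _ => V \ T)
        · intro S hS
          simp only [mem_filter, mem_powersetCard] at hS
          obtain ⟨⟨⟨hSV, hScard⟩, hnf⟩, hprof⟩ := hS
          have hxS : ∀ i, (G i \ S).card = x i :=
            fun i => congrFun (congrArg Prod.fst hprof) i
          have hyS : ∀ j, (H j \ S).card = y j :=
            fun j => congrFun (congrArg Prod.fst (congrArg Prod.snd hprof)) j
          have hzS : (W \ S).card = z := congrArg Prod.snd (congrArg Prod.snd hprof)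
          simp only [mem_filter, mem_powerset]
          refine ⟨sdiff_subset, ?_⟩
          rintro ((i | j) | u) <;> simp only [hB, Sum.elim_inl, Sum.elim_inr]
          · rw [hInterSdiff _ _ (hGV i)]; exact hxS i
          · rw [hInterSdiff _ _ (hHV j)]; exact hyS j
          · rw [hInterSdiff _ _ hWV]; exact hzS
        · intro T hT
          simp only [mem_filter, mem_powerset] at hT
          obtain ⟨hTV, hc⟩ := hT
          have hxT : ∀ i, (G i ∩ T).card = x i := fun i => hc (Sum.inl (Sum.inl i))
          have hyT : ∀ j, (H j ∩ T).card = y j := fun j => hc (Sum.inl (Sum.inr j))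
          have hzT : (W ∩ T).card = z := hc (Sum.inr ())
          have hTc : T.card = N - L := by
            rw [hTcard T hTV, Finset.sum_congr rfl fun i _ => hxT i,
              Finset.sum_congr rfl fun j _ => hyT j, hzT]
            exact hcond.2
          simp only [mem_filter, mem_powersetCard]
          refine ⟨⟨⟨sdiff_subset, ?_⟩, ?_⟩, ?_⟩
          · rw [card_sdiff_of_subset hTV, hV, hTc]; omega
          · rw [hNF (V \ T)]
            have e1 : (Finset.univ.filter (fun i : Fin k => (G i \ (V \ T)).card = 0))
                = Finset.univ.filter (fun i => x i = 0) :=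
              Finset.filter_congr fun i _ => by
                rw [hSdiffSdiff _ _ (hGV i), hxT i]
            have e2 : (Finset.univ.filter (fun j : Fin e => 0 < (H j \ (V \ T)).card))
                = Finset.univ.filter (fun j => 0 < y j) :=
              Finset.filter_congr fun j _ => by
                rw [hSdiffSdiff _ _ (hHV j), hyT j]
            rw [e1, e2]
            exact hcond.1
          · simp only [Prod.mk.injEq]
            refine ⟨?_, ?_, ?_⟩
            · funext i; rw [hSdiffSdiff _ _ (hGV i)]; exact hxT i
            · funext j; rw [hSdiffSdiff _ _ (hHV j)]; exact hyT j
            · rw [hSdiffSdiff _ _ hWV]; exact hzT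
        · intro S hS
          simp only [mem_filter, mem_powersetCard] at hS
          exact Finset.sdiff_sdiff_eq_self hS.1.1.1
        · intro T hT
          simp only [mem_filter, mem_powerset] at hT
          exact Finset.sdiff_sdiff_eq_self hT.1
      rw [hcards, hpc, hprod]
    · rw [if_neg hcond, Finset.card_eq_zero, Finset.filter_eq_empty_iff]
      intro S hS hprof
      simp only [mem_filter, mem_powersetCard] at hS
      obtain ⟨⟨hSV, hScard⟩, hnf⟩ := hS
      have hxS : ∀ i, (G i \ S).card = x i :=
        fun i => congrFun (congrArg Prod.fst hprof) i
      have hyS : ∀ j, (H j \ S).card = y j :=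
        fun j => congrFun (congrArg Prod.fst (congrArg Prod.snd hprof)) j
      have hzS : (W \ S).card = z := congrArg Prod.snd (congrArg Prod.snd hprof)
      apply hcond
      constructor
      · rw [hNF S] at hnf
        have e1 : (Finset.univ.filter (fun i : Fin k => (G i \ S).card = 0))
            = Finset.univ.filter (fun i => x i = 0) :=
          Finset.filter_congr fun i _ => by rw [hxS i]
        have e2 : (Finset.univ.filter (fun j : Fin e => 0 < (H j \ S).card))
            = Finset.univ.filter (fun j => 0 < y j) :=
          Finset.filter_congr fun j _ => by rw [hyS j]
        rwa [e1, e2] at hnf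
      · have hkey : (∑ i, x i) + (∑ j, y j) + z = (V \ S).card := by
          rw [hTcard (V \ S) sdiff_subset]
          congr 1
          · congr 1
            · exact (Finset.sum_congr rfl fun i _ => by
                rw [hInterSdiff _ _ (hGV i), hxS i]).symm
            · exact (Finset.sum_congr rfl fun j _ => by
                rw [hInterSdiff _ _ (hHV j), hyS j]).symm
          · rw [hInterSdiff _ _ hWV, hzS]
        rw [hkey, card_sdiff_of_subset hSV, hV, hScard]
  refine ⟨part1, ?_⟩
  -- Part 2: probability statement
  have htot : (V.powersetCard L).card = N.choose L := by rw [card_powersetCard, hV]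
  have hsplit := Finset.card_filter_add_card_filter_not
    (s := V.powersetCard L)
    (p := fun S => (Finset.univ.filter (fun i => G i ⊆ S)).card
        ≤ (Finset.univ.filter (fun j => ¬ H j ⊆ S)).card)
  have hSle := Finset.card_filter_le (V.powersetCard L)
    (fun S => (Finset.univ.filter (fun i => G i ⊆ S)).card
        ≤ (Finset.univ.filter (fun j => ¬ H j ⊆ S)).card)
  rw [part1, htot] at hSle
  rw [part1, htot] at hsplit
  have hfatal := Nat.eq_sub_of_add_eq' hsplit
  rw [hfatal, Nat.cast_sub hSle]
  have hC : ((N.choose L : ℚ)) ≠ 0 := by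
    exact_mod_cast (Nat.choose_pos hL).ne'
  rw [sub_div, div_self hC]
end

section
/- Consider a HyRES(R,e,1,k) scheme with R ≥ 2, e ≥ 2, k ≥ 2: the stored fragments are Rk replicated fragments partitioned into k groups of R identical copies each, together with a set C of e+1 coded fragments (e MDS coded fragments plus one local linear combination of them). A deletion set D of fragments is fatal iff the number of groups all of whose R copies lie in D exceeds min(number of coded fragments in C not in D, e). Then the minimum cardinality of a fatal deletion set equals R + e + 1, i.e., no set of at most R + e deleted fragments is fatal, and deleting all R copies of a single original fragment together with all e+1 coded fragments is fatal. (Paper's Lemma 1, case l = 1.) -/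
/-- In a HyRES(R,e,1,k) scheme the stored fragments are the `R·k` replicated
fragments `Sum.inl (i, r)` (copy `r` of original fragment `i`) together with the
`e+1` coded fragments `Sum.inr c` (`e` MDS fragments plus one local combination).
A deletion set `D` is fatal iff the number of original fragments all of whose `R`
copies lie in `D` exceeds `min(#coded fragments not in D, e)`. -/
def HyRESl1Fatal (R e k : ℕ) (D : Finset ((Fin k × Fin R) ⊕ Fin (e + 1))) : Prop :=
  min ((Finset.univ.filter (fun c : Fin (e + 1) => Sum.inr c ∉ D)).card) e
    < (Finset.univ.filter (fun i : Fin k => ∀ r : Fin R, Sum.inl (i, r) ∈ D)).card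

/-- **Paper's Lemma 1, case `l = 1`.**
For a HyRES(R,e,1,k) scheme with `R ≥ 2`, `e ≥ 2`, `k ≥ 2`, the minimum cardinality
of a fatal deletion set equals `R + e + 1`: no set of at most `R + e` deleted
fragments is fatal, and deleting all `R` copies of a single original fragment
together with all `e+1` coded fragments is a fatal set of cardinality `R + e + 1`. -/
theorem hyres_l1_worst_case_loss (R e k : ℕ) (hR : 2 ≤ R) (he : 2 ≤ e) (hk : 2 ≤ k) :
    (∀ D : Finset ((Fin k × Fin R) ⊕ Fin (e + 1)),
        HyRESl1Fatal R e k D → R + e + 1 ≤ D.card) ∧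
    (∀ i : Fin k,
        HyRESl1Fatal R e k
          (((Finset.univ : Finset (Fin R)).image
              (fun r => (Sum.inl (i, r) : (Fin k × Fin R) ⊕ Fin (e + 1)))) ∪
            ((Finset.univ : Finset (Fin (e + 1))).image Sum.inr)) ∧
        (((Finset.univ : Finset (Fin R)).image
              (fun r => (Sum.inl (i, r) : (Fin k × Fin R) ⊕ Fin (e + 1)))) ∪
            ((Finset.univ : Finset (Fin (e + 1))).image Sum.inr)).card = R + e + 1) := by
  constructor
  · intro D hD
    unfold HyRESl1Fatal at hD
    set G := Finset.univ.filter (fun i : Fin k => ∀ r : Fin R, Sum.inl (i, r) ∈ D) with hG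
    set m := (Finset.univ.filter (fun c : Fin (e + 1) => Sum.inr c ∉ D)).card with hm
    set S := ((G ×ˢ (Finset.univ : Finset (Fin R))).image Sum.inl) ∪
      ((Finset.univ.filter (fun c : Fin (e + 1) => Sum.inr c ∈ D)).image Sum.inr) with hS
    have hsub : S ⊆ D := by
      intro x hx
      simp only [hS, Finset.mem_union, Finset.mem_image, Finset.mem_product,
        Finset.mem_filter, Finset.mem_univ, true_and] at hx
      rcases hx with ⟨⟨a, r⟩, ⟨ha, _⟩, rfl⟩ | ⟨c, hc, rfl⟩
      · exact (Finset.mem_filter.mp ha).2 r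
      · exact hc
    have hdisj : Disjoint ((G ×ˢ (Finset.univ : Finset (Fin R))).image Sum.inl)
        ((Finset.univ.filter (fun c : Fin (e + 1) => Sum.inr c ∈ D)).image Sum.inr) := by
      simp only [Finset.disjoint_left, Finset.mem_image]
      rintro x ⟨p, _, rfl⟩ ⟨c, _, h⟩
      exact Sum.inl_ne_inr h.symm
    have hcardS : S.card = G.card * R + (e + 1 - m) := by
      rw [hS, Finset.card_union_of_disjoint hdisj,
        Finset.card_image_of_injective _ Sum.inl_injective,
        Finset.card_image_of_injective _ Sum.inr_injective,
        Finset.card_product, Finset.card_univ, Fintype.card_fin]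
      congr 1
      have := Finset.card_filter_add_card_filter_not
        (s := (Finset.univ : Finset (Fin (e + 1))))
        (p := fun c : Fin (e + 1) => Sum.inr c ∈ D)
      simp only [Finset.card_univ, Fintype.card_fin] at this
      omega
    have hm1 : m ≤ e + 1 := by
      calc m ≤ (Finset.univ : Finset (Fin (e + 1))).card := Finset.card_filter_le _ _
        _ = e + 1 := by simp
    have hg : min m e + 1 ≤ G.card := hD
    have hDcard : S.card ≤ D.card := Finset.card_le_card hsub
    rw [hcardS] at hDcard
    have hmul : (min m e + 1) * R ≤ G.card * R := Nat.mul_le_mul_right _ hg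
    rcases le_or_gt m e with hc | hc
    · rw [min_eq_left hc] at hmul
      have : m ≤ m * R := Nat.le_mul_of_pos_right m (by omega)
      have hexp : (m + 1) * R = m * R + R := by ring
      omega
    · have hme : m = e + 1 := by omega
      rw [min_eq_right (by omega : e ≤ m)] at hmul
      have hexp : (e + 1) * R = e * R + R := by ring
      have : e * 2 ≤ e * R := Nat.mul_le_mul_left e hR
      omega
  · intro i
    set D := (((Finset.univ : Finset (Fin R)).image
        (fun r => (Sum.inl (i, r) : (Fin k × Fin R) ⊕ Fin (e + 1)))) ∪
      ((Finset.univ : Finset (Fin (e + 1))).image Sum.inr)) with hDdef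
    constructor
    · unfold HyRESl1Fatal
      have h1 : (Finset.univ.filter (fun c : Fin (e + 1) => Sum.inr c ∉ D)).card = 0 := by
        rw [Finset.card_eq_zero, Finset.filter_eq_empty_iff]
        intro c _
        simp [hDdef]
      have h2 : i ∈ Finset.univ.filter (fun j : Fin k => ∀ r : Fin R, Sum.inl (j, r) ∈ D) := by
        simp [hDdef]
      rw [h1]
      simp only [Nat.zero_min]
      exact Finset.card_pos.mpr ⟨i, h2⟩
    · have hdisj : Disjoint ((Finset.univ : Finset (Fin R)).image
          (fun r => (Sum.inl (i, r) : (Fin k × Fin R) ⊕ Fin (e + 1))))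
          ((Finset.univ : Finset (Fin (e + 1))).image Sum.inr) := by
        simp only [Finset.disjoint_left, Finset.mem_image]
        rintro x ⟨r, _, rfl⟩ ⟨c, _, h⟩
        exact Sum.inl_ne_inr h.symm
      rw [Finset.card_union_of_disjoint hdisj,
        Finset.card_image_of_injective _ (fun a b h => by
          simpa using (Sum.inl_injective h)),
        Finset.card_image_of_injective _ Sum.inr_injective]
      simp [Nat.add_assoc]
end

section
/- Consider a HyRES(R,e+1,0,k) scheme with R ≥ 2, e ≥ 2 (so e+1 ≥ 3 MDS coded fragments), k ≥ 2: the stored fragments are Rk replicated fragments partitioned into k groups of R identical copies each, together with a set C of e+1 MDS coded fragments. A deletion set D of fragments is fatal iff the number of groups all of whose R copies lie in D exceeds the number of coded fragments in C not in D. Then the minimum cardinality of a fatal deletion set equals R + e + 1, i.e., no set of at most R + e deleted fragments is fatal, and deleting all R copies of a single original fragment together with all e+1 coded fragments is fatal. (Paper's Lemma 1, case l = 0.) -/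
/-- In a HyRES(R,e+1,0,k) scheme the stored fragments are the `R·k` replicated
fragments `Sum.inl (i, r)` (copy `r` of original fragment `i`) together with the
`e+1` MDS coded fragments `Sum.inr c`. A deletion set `D` is fatal iff the number of
original fragments all of whose `R` copies lie in `D` exceeds the number of coded
fragments not in `D`. -/
def HyRESl0Fatal (R e k : ℕ) (D : Finset ((Fin k × Fin R) ⊕ Fin (e + 1))) : Prop :=
  (Finset.univ.filter (fun c : Fin (e + 1) => Sum.inr c ∉ D)).card
    < (Finset.univ.filter (fun i : Fin k => ∀ r : Fin R, Sum.inl (i, r) ∈ D)).card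

/-- **Paper's Lemma 1, case `l = 0`.**
For a HyRES(R,e+1,0,k) scheme with `R ≥ 2`, `e ≥ 2`, `k ≥ 2`, the minimum cardinality
of a fatal deletion set equals `R + e + 1`: no set of at most `R + e` deleted
fragments is fatal, and deleting all `R` copies of a single original fragment
together with all `e+1` coded fragments is a fatal set of cardinality `R + e + 1`. -/
theorem hyres_l0_worst_case_loss (R e k : ℕ) (hR : 2 ≤ R) (he : 2 ≤ e) (hk : 2 ≤ k) :
    (∀ D : Finset ((Fin k × Fin R) ⊕ Fin (e + 1)),
        HyRESl0Fatal R e k D → R + e + 1 ≤ D.card) ∧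
    (∀ i : Fin k,
        HyRESl0Fatal R e k
          (((Finset.univ : Finset (Fin R)).image
              (fun r => (Sum.inl (i, r) : (Fin k × Fin R) ⊕ Fin (e + 1)))) ∪
            ((Finset.univ : Finset (Fin (e + 1))).image Sum.inr)) ∧
        (((Finset.univ : Finset (Fin R)).image
              (fun r => (Sum.inl (i, r) : (Fin k × Fin R) ⊕ Fin (e + 1)))) ∪
            ((Finset.univ : Finset (Fin (e + 1))).image Sum.inr)).card = R + e + 1) := by
  constructor
  · intro D hD
    unfold HyRESl0Fatal at hD
    set G := Finset.univ.filter (fun i : Fin k => ∀ r : Fin R, Sum.inl (i, r) ∈ D) with hGdef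
    set Sv := Finset.univ.filter (fun c : Fin (e + 1) => Sum.inr c ∉ D) with hSdef
    set Dl := Finset.univ.filter (fun c : Fin (e + 1) => Sum.inr c ∈ D) with hDldef
    have hds : Dl.card + Sv.card = e + 1 := by
      rw [hDldef, hSdef, Finset.card_filter_add_card_filter_not]
      simp
    -- the witness subset of D
    set A : Finset ((Fin k × Fin R) ⊕ Fin (e + 1)) :=
      (G ×ˢ (Finset.univ : Finset (Fin R))).image Sum.inl with hAdef
    set B : Finset ((Fin k × Fin R) ⊕ Fin (e + 1)) := Dl.image Sum.inr with hBdef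
    have hsub : A ∪ B ⊆ D := by
      intro x hx
      rcases Finset.mem_union.mp hx with hx | hx
      · rcases Finset.mem_image.mp hx with ⟨⟨i, r⟩, hir, rfl⟩
        have := (Finset.mem_product.mp hir).1
        exact (Finset.mem_filter.mp this).2 r
      · rcases Finset.mem_image.mp hx with ⟨c, hc, rfl⟩
        exact (Finset.mem_filter.mp hc).2
    have hdisj : Disjoint A B := by
      rw [Finset.disjoint_left]
      intro x hx hx'
      rcases Finset.mem_image.mp hx with ⟨p, _, rfl⟩
      rcases Finset.mem_image.mp hx' with ⟨c, _, h⟩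
      exact Sum.inl_ne_inr h.symm
    have hA : A.card = G.card * R := by
      rw [hAdef, Finset.card_image_of_injective _ Sum.inl_injective,
        Finset.card_product, Finset.card_univ, Fintype.card_fin]
    have hB : B.card = Dl.card := by
      rw [hBdef, Finset.card_image_of_injective _ Sum.inr_injective]
    have hcard : G.card * R + Dl.card ≤ D.card := by
      calc G.card * R + Dl.card = (A ∪ B).card := by
            rw [Finset.card_union_of_disjoint hdisj, hA, hB]
        _ ≤ D.card := Finset.card_le_card hsub
    nlinarith [hD, hds, hcard, hR]
  · intro i
    set A : Finset ((Fin k × Fin R) ⊕ Fin (e + 1)) :=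
      (Finset.univ : Finset (Fin R)).image
        (fun r => (Sum.inl (i, r) : (Fin k × Fin R) ⊕ Fin (e + 1))) with hAdef
    set B : Finset ((Fin k × Fin R) ⊕ Fin (e + 1)) :=
      (Finset.univ : Finset (Fin (e + 1))).image Sum.inr with hBdef
    have hdisj : Disjoint A B := by
      rw [Finset.disjoint_left]
      intro x hx hx'
      rcases Finset.mem_image.mp hx with ⟨r, _, rfl⟩
      rcases Finset.mem_image.mp hx' with ⟨c, _, h⟩
      exact Sum.inl_ne_inr h.symm
    constructor
    · unfold HyRESl0Fatal
      have h1 : (Finset.univ.filter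
          (fun c : Fin (e + 1) => Sum.inr c ∉ A ∪ B)).card = 0 := by
        rw [Finset.card_eq_zero, Finset.filter_eq_empty_iff]
        intro c _
        simp only [not_not]
        exact Finset.mem_union_right _ (Finset.mem_image_of_mem _ (Finset.mem_univ c))
      have h2 : 0 < (Finset.univ.filter
          (fun j : Fin k => ∀ r : Fin R, Sum.inl (j, r) ∈ A ∪ B)).card := by
        rw [Finset.card_pos]
        refine ⟨i, Finset.mem_filter.mpr ⟨Finset.mem_univ i, fun r => ?_⟩⟩
        exact Finset.mem_union_left _ (Finset.mem_image_of_mem _ (Finset.mem_univ r))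
      omega
    · have hA : A.card = R := by
        rw [hAdef, Finset.card_image_of_injective, Finset.card_univ, Fintype.card_fin]
        intro a b hab
        simpa using hab
      have hB : B.card = e + 1 := by
        rw [hBdef, Finset.card_image_of_injective _ Sum.inr_injective,
          Finset.card_univ, Fintype.card_fin]
      rw [Finset.card_union_of_disjoint hdisj, hA, hB]
      omega
end

section
/- Consider a HyRES(2,2e,0,k) scheme with e ≥ 1, consisting of k ≥ 2 groups of 2 identical copies of the original fragments together with a set C of 2e ≥ 2 MDS coded fragments, where a deletion set D is fatal iff #{groups with both copies in D} > |C \ D|. Then the number of fatal deletion sets of the minimum cardinality 2e + 2 equals exactly k, namely the sets consisting of both copies of one original fragment together with all 2e coded fragments. -/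
/-- In a HyRES(2,2e,0,k) scheme the stored fragments are the `2k` replicated
fragments `Sum.inl (i, r)` (copy `r` of original fragment `i`) together with `2e`
MDS coded fragments `Sum.inr c`. A deletion set `D` is fatal iff the number of
original fragments with both copies in `D` exceeds the number of coded fragments
not in `D`. -/
def HyRES2l0Fatal (e k : ℕ) (D : Finset ((Fin k × Fin 2) ⊕ Fin (2 * e))) : Prop :=
  (Finset.univ.filter (fun c : Fin (2 * e) => Sum.inr c ∉ D)).card
    < (Finset.univ.filter (fun i : Fin k => ∀ r : Fin 2, Sum.inl (i, r) ∈ D)).card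

instance (e k : ℕ) : DecidablePred (HyRES2l0Fatal e k) := fun _ => by
  unfold HyRES2l0Fatal; infer_instance

/-- The deletion set consisting of both copies of original fragment `i` together
with all `2e` coded fragments. -/
def HyRES2l0WorstSet (e k : ℕ) (i : Fin k) : Finset ((Fin k × Fin 2) ⊕ Fin (2 * e)) :=
  ((Finset.univ : Finset (Fin 2)).image
      (fun r => (Sum.inl (i, r) : (Fin k × Fin 2) ⊕ Fin (2 * e)))) ∪
    ((Finset.univ : Finset (Fin (2 * e))).image Sum.inr)

open Finset

lemma mem_worstSet (e k : ℕ) (i : Fin k) (x : (Fin k × Fin 2) ⊕ Fin (2 * e)) :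
    x ∈ HyRES2l0WorstSet e k i ↔ (∃ r, x = Sum.inl (i, r)) ∨ (∃ c, x = Sum.inr c) := by
  simp [HyRES2l0WorstSet, eq_comm]

lemma worstSet_card (e k : ℕ) (i : Fin k) :
    (HyRES2l0WorstSet e k i).card = 2 * e + 2 := by
  rw [HyRES2l0WorstSet, Finset.card_union_of_disjoint, Finset.card_image_of_injective,
    Finset.card_image_of_injective]
  · simp [add_comm]
  · exact fun a b h => Sum.inr.inj h
  · exact fun a b h => by simpa using h
  · simp [Finset.disjoint_left]

lemma worstSet_fatal (e k : ℕ) (i : Fin k) : HyRES2l0Fatal e k (HyRES2l0WorstSet e k i) := by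
  unfold HyRES2l0Fatal
  have h1 : (Finset.univ.filter (fun c : Fin (2 * e) => Sum.inr c ∉ HyRES2l0WorstSet e k i)) = ∅ := by
    simp [Finset.filter_eq_empty_iff, mem_worstSet]
  have h2 : (Finset.univ.filter (fun j : Fin k => ∀ r : Fin 2, Sum.inl (j, r) ∈ HyRES2l0WorstSet e k i)) = {i} := by
    ext j
    simp only [Finset.mem_filter, Finset.mem_univ, true_and, Finset.mem_singleton, mem_worstSet]
    constructor
    · intro h
      rcases h 0 with h | h
      · obtain ⟨r, hr⟩ := h
        exact congrArg Prod.fst (Sum.inl.inj hr)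
      · obtain ⟨c, hc⟩ := h; cases hc
    · rintro rfl r
      exact Or.inl ⟨r, rfl⟩
  rw [h1, h2]
  simp

lemma fatal_eq_worstSet (e k : ℕ) (D : Finset ((Fin k × Fin 2) ⊕ Fin (2 * e)))
    (hcard : D.card = 2 * e + 2) (hfatal : HyRES2l0Fatal e k D) :
    ∃ i : Fin k, D = HyRES2l0WorstSet e k i := by
  classical
  set R := D.toLeft with hR
  set C := D.toRight with hC
  set B := Finset.univ.filter (fun i : Fin k => ∀ r : Fin 2, Sum.inl (i, r) ∈ D) with hB
  have hsum : R.card + C.card = 2 * e + 2 := by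
    rw [hR, hC, Finset.card_toLeft_add_card_toRight, hcard]
  have hCle : C.card ≤ 2 * e := by
    simpa using (Finset.card_le_univ C)
  have hfilterC : (Finset.univ.filter (fun c : Fin (2 * e) => Sum.inr c ∉ D)) = Cᶜ := by
    ext c; simp [hC, Finset.mem_compl]
  have hfatal' : 2 * e - C.card < B.card := by
    have := hfatal
    unfold HyRES2l0Fatal at this
    rwa [hfilterC, Finset.card_compl, Fintype.card_fin] at this
  have hBsub : B ×ˢ (Finset.univ : Finset (Fin 2)) ⊆ R := by
    rintro ⟨j, r⟩ hjr
    rw [Finset.mem_product] at hjr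
    rw [hR, Finset.mem_toLeft]
    exact (Finset.mem_filter.mp hjr.1).2 r
  have hBle : B.card * 2 ≤ R.card := by
    have := Finset.card_le_card hBsub
    simpa [Finset.card_product] using this
  have hC2e : C.card = 2 * e ∧ B.card = 1 ∧ R.card = 2 := by omega
  obtain ⟨hCeq, hBeq, hReq⟩ := hC2e
  have hCuniv : C = Finset.univ := by
    apply Finset.eq_univ_of_card
    simp [hCeq]
  obtain ⟨i, hBi⟩ := Finset.card_eq_one.mp hBeq
  have hRset : B ×ˢ (Finset.univ : Finset (Fin 2)) = R := by
    apply Finset.eq_of_subset_of_card_le hBsub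
    rw [hReq, Finset.card_product, hBeq]; simp
  refine ⟨i, ?_⟩
  ext x
  rw [mem_worstSet]
  cases x with
  | inl p =>
    have hp : Sum.inl p ∈ D ↔ p ∈ R := by rw [hR, Finset.mem_toLeft]
    rw [hp, ← hRset, hBi]
    cases p with
    | mk j r =>
      simp only [Finset.mem_product, Finset.mem_singleton, Finset.mem_univ, and_true]
      constructor
      · rintro rfl; exact Or.inl ⟨r, rfl⟩
      · rintro (⟨r', hr'⟩ | ⟨c, hc⟩)
        · exact congrArg Prod.fst (Sum.inl.inj hr')
        · cases hc
  | inr c =>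
    have hp : Sum.inr c ∈ D ↔ c ∈ C := by rw [hC, Finset.mem_toRight]
    rw [hp, hCuniv]
    simp

lemma worstSet_injective (e k : ℕ) : Function.Injective (HyRES2l0WorstSet e k) := by
  intro i j h
  have : Sum.inl (i, (0 : Fin 2)) ∈ HyRES2l0WorstSet e k j := by
    rw [← h, mem_worstSet]; exact Or.inl ⟨0, rfl⟩
  rw [mem_worstSet] at this
  rcases this with ⟨r, hr⟩ | ⟨c, hc⟩
  · exact congrArg Prod.fst (Sum.inl.inj hr)
  · cases hc

lemma hyres2_l0_set_eq (e k : ℕ) :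
    Finset.filter (HyRES2l0Fatal e k)
        (Finset.powersetCard (2 * e + 2) (Finset.univ : Finset ((Fin k × Fin 2) ⊕ Fin (2 * e))))
      = Finset.image (HyRES2l0WorstSet e k) Finset.univ := by
  ext D
  simp only [Finset.mem_filter, Finset.mem_powersetCard_univ, Finset.mem_image,
    Finset.mem_univ, true_and]
  constructor
  · rintro ⟨hcard, hfatal⟩
    obtain ⟨i, hi⟩ := fatal_eq_worstSet e k D hcard hfatal
    exact ⟨i, hi.symm⟩
  · rintro ⟨i, rfl⟩
    exact ⟨worstSet_card e k i, worstSet_fatal e k i⟩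

/-- **Paper's remark following Lemma 2, case `l = 0`.**
For a HyRES(2,2e,0,k) scheme with `e ≥ 1`, `k ≥ 2`, the fatal deletion sets of the
minimum cardinality `2e + 2` are exactly the `k` sets consisting of both copies of
one original fragment together with all `2e` coded fragments; in particular their
number equals `k`. -/
theorem hyres2_l0_worst_case_pattern_count (e k : ℕ) (he : 1 ≤ e) (hk : 2 ≤ k) :
    (((Finset.univ : Finset ((Fin k × Fin 2) ⊕ Fin (2 * e))).powersetCard
          (2 * e + 2)).filter (HyRES2l0Fatal e k)
      = (Finset.univ : Finset (Fin k)).image (HyRES2l0WorstSet e k)) ∧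
    ((((Finset.univ : Finset ((Fin k × Fin 2) ⊕ Fin (2 * e))).powersetCard
          (2 * e + 2)).filter (HyRES2l0Fatal e k)).card = k) := by
  refine ⟨hyres2_l0_set_eq e k, ?_⟩
  rw [hyres2_l0_set_eq e k, Finset.card_image_of_injective _ (worstSet_injective e k),
    Finset.card_univ, Fintype.card_fin]
end

section
/- Consider a HyRES(2,2e−1,1,k) scheme with e ≥ 1 and 2e−1 ≥ 2 (i.e., e ≥ 2), k ≥ 2: k groups of 2 identical copies of the original fragments together with a set C of 2e coded fragments (2e−1 MDS fragments plus one local combination), where a deletion set D is fatal iff #{groups with both copies in D} > min(|C \ D|, 2e−1). Then the number of fatal deletion sets of the minimum cardinality 2e + 2 equals exactly k, namely the sets consisting of both copies of one original fragment together with all 2e coded fragments. (Paper's remark following Lemma 2, case l = 1.) -/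
/-- In a HyRES(2,2e−1,1,k) scheme the stored fragments are the `2k` replicated
fragments `Sum.inl (i, r)` (copy `r` of original fragment `i`) together with a set of
`2e` coded fragments `Sum.inr c` (`2e−1` MDS fragments plus one local combination,
which together span only `2e−1` effective coded fragments). A deletion set `D` is
fatal iff the number of original fragments with both copies in `D` exceeds
`min(#coded fragments not in D, 2e−1)`. -/
def HyRES2l1Fatal (e k : ℕ) (D : Finset ((Fin k × Fin 2) ⊕ Fin (2 * e))) : Prop :=
  min ((Finset.univ.filter (fun c : Fin (2 * e) => Sum.inr c ∉ D)).card) (2 * e - 1)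
    < (Finset.univ.filter (fun i : Fin k => ∀ r : Fin 2, Sum.inl (i, r) ∈ D)).card

instance (e k : ℕ) : DecidablePred (HyRES2l1Fatal e k) := fun _ => by
  unfold HyRES2l1Fatal; infer_instance

/-- The deletion set consisting of both copies of original fragment `i` together
with all `2e` coded fragments. -/
def HyRES2l1WorstSet (e k : ℕ) (i : Fin k) : Finset ((Fin k × Fin 2) ⊕ Fin (2 * e)) :=
  ((Finset.univ : Finset (Fin 2)).image
      (fun r => (Sum.inl (i, r) : (Fin k × Fin 2) ⊕ Fin (2 * e)))) ∪
    ((Finset.univ : Finset (Fin (2 * e))).image Sum.inr)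

open Finset

lemma worst_card (e k : ℕ) (i : Fin k) : (HyRES2l1WorstSet e k i).card = 2 * e + 2 := by
  unfold HyRES2l1WorstSet
  rw [card_union_of_disjoint (by simp [disjoint_left])]
  rw [card_image_of_injective _ (fun a b h => by simpa using h),
      card_image_of_injective _ Sum.inr_injective]
  simp; omega

lemma worst_fatal (e k : ℕ) (i : Fin k) : HyRES2l1Fatal e k (HyRES2l1WorstSet e k i) := by
  unfold HyRES2l1Fatal
  have h1 : (univ.filter (fun c : Fin (2*e) => Sum.inr c ∉ HyRES2l1WorstSet e k i)) = ∅ := by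
    ext c; simp [HyRES2l1WorstSet]
  have h2 : i ∈ (univ.filter
      (fun j : Fin k => ∀ r : Fin 2, Sum.inl (j, r) ∈ HyRES2l1WorstSet e k i)) := by
    simp [HyRES2l1WorstSet]
  rw [h1]
  simp only [card_empty, Nat.zero_min]
  exact card_pos.mpr ⟨i, h2⟩

lemma count_le (e k : ℕ) (D : Finset ((Fin k × Fin 2) ⊕ Fin (2 * e))) :
    2 * (univ.filter (fun i : Fin k => ∀ r : Fin 2, Sum.inl (i, r) ∈ D)).card
      + (univ.filter (fun c : Fin (2 * e) => Sum.inr c ∈ D)).card ≤ D.card := by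
  classical
  set A := univ.filter (fun i : Fin k => ∀ r : Fin 2, Sum.inl (i, r) ∈ D) with hA
  set B := univ.filter (fun c : Fin (2 * e) => Sum.inr c ∈ D) with hB
  have hsub : ((A ×ˢ (univ : Finset (Fin 2))).image Sum.inl ∪ B.image Sum.inr) ⊆ D := by
    intro x hx
    rcases mem_union.mp hx with hx | hx
    · obtain ⟨p, hp, rfl⟩ := mem_image.mp hx
      have := (mem_filter.mp (mem_product.mp hp).1).2
      exact this p.2
    · obtain ⟨c, hc, rfl⟩ := mem_image.mp hx
      exact (mem_filter.mp hc).2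
  have hcard : ((A ×ˢ (univ : Finset (Fin 2))).image Sum.inl ∪ B.image Sum.inr).card
      = 2 * A.card + B.card := by
    rw [card_union_of_disjoint (by simp [disjoint_left]),
        card_image_of_injective _ Sum.inl_injective,
        card_image_of_injective _ Sum.inr_injective, card_product]
    simp [mul_comm]
  calc 2 * A.card + B.card = _ := hcard.symm
    _ ≤ D.card := card_le_card hsub

/-- **Paper's remark following Lemma 2, case `l = 1`.**
For a HyRES(2,2e−1,1,k) scheme with `e ≥ 2` (so `2e−1 ≥ 2`), `k ≥ 2`, the fatal
deletion sets of the minimum cardinality `2e + 2` are exactly the `k` sets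
consisting of both copies of one original fragment together with all `2e` coded
fragments; in particular their number equals `k`. -/
theorem hyres2_l1_worst_case_pattern_count (e k : ℕ) (he : 2 ≤ e) (hk : 2 ≤ k) :
    (((Finset.univ : Finset ((Fin k × Fin 2) ⊕ Fin (2 * e))).powersetCard
          (2 * e + 2)).filter (HyRES2l1Fatal e k)
      = (Finset.univ : Finset (Fin k)).image (HyRES2l1WorstSet e k)) ∧
    ((((Finset.univ : Finset ((Fin k × Fin 2) ⊕ Fin (2 * e))).powersetCard
          (2 * e + 2)).filter (HyRES2l1Fatal e k)).card = k) := by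
  classical
  have key : ((Finset.univ : Finset ((Fin k × Fin 2) ⊕ Fin (2 * e))).powersetCard
          (2 * e + 2)).filter (HyRES2l1Fatal e k)
      = (Finset.univ : Finset (Fin k)).image (HyRES2l1WorstSet e k) := by
    ext D
    simp only [mem_filter, mem_powersetCard, mem_image, mem_univ, true_and]
    constructor
    · rintro ⟨⟨-, hcardD⟩, hf⟩
      unfold HyRES2l1Fatal at hf
      set A := univ.filter (fun i : Fin k => ∀ r : Fin 2, Sum.inl (i, r) ∈ D) with hAdef
      set B := univ.filter (fun c : Fin (2 * e) => Sum.inr c ∈ D) with hBdef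
      have hle : 2 * A.card + B.card ≤ 2 * e + 2 := hcardD ▸ count_le e k D
      have h0 : B.card + (univ.filter (fun c : Fin (2 * e) => Sum.inr c ∉ D)).card
          = 2 * e := by
        have := Finset.card_filter_add_card_filter_not
          (s := (univ : Finset (Fin (2 * e)))) (p := fun c => Sum.inr c ∈ D)
        simpa [hBdef] using this
      have hB : B.card = 2 * e ∧ A.card = 1 := by omega
      obtain ⟨i, hi⟩ := card_eq_one.mp hB.2
      refine ⟨i, ?_⟩
      have hBuniv : B = univ := eq_univ_of_card _ (by simpa using hB.1)
      have hsub : HyRES2l1WorstSet e k i ⊆ D := by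
        intro x hx
        rcases mem_union.mp hx with hx | hx
        · obtain ⟨r, -, rfl⟩ := mem_image.mp hx
          have hiA : i ∈ A := hi ▸ mem_singleton_self i
          exact (mem_filter.mp hiA).2 r
        · obtain ⟨c, -, rfl⟩ := mem_image.mp hx
          have hcB : c ∈ B := hBuniv ▸ mem_univ c
          exact (mem_filter.mp hcB).2
      exact eq_of_subset_of_card_le hsub (by rw [hcardD, worst_card])
    · rintro ⟨i, rfl⟩
      exact ⟨⟨subset_univ _, worst_card e k i⟩, worst_fatal e k i⟩
  have hinj : Function.Injective (HyRES2l1WorstSet e k) := by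
    intro i j h
    have hmem : (Sum.inl (i, 0) : (Fin k × Fin 2) ⊕ Fin (2 * e))
        ∈ HyRES2l1WorstSet e k j := by
      rw [← h]; exact mem_union_left _ (mem_image.mpr ⟨0, mem_univ _, rfl⟩)
    rcases mem_union.mp hmem with h' | h'
    · obtain ⟨r, -, hr⟩ := mem_image.mp h'
      exact ((Prod.ext_iff.mp (Sum.inl_injective hr)).1).symm
    · obtain ⟨c, -, hc⟩ := mem_image.mp h'
      simp at hc
  refine ⟨key, ?_⟩
  rw [key, card_image_of_injective _ hinj]
  simp
end
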